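/- Let γ > 0 and let q ∈ L¹(ℝ;ℂ) with supp q ⊆ [0,γ]. If r > 0 satisfies 4rγ/π + ‖q‖₁ < log 2, where ‖q‖₁ = ∫_ℝ |q(x)| dx, then the function a has no zeros of modulus at most r; in particular, the Dirac operator H has no resonances in the disk {λ : |λ| ≤ r}. -/

import Mathlib

/-!
For `‖λ‖ ≤ r` the integrand of `a_n(λ)` has modulus at most
`∏ |q(t_i)| · exp (2r Σ_j (t_{2j} - t_{2j-1}))`, and the gaps `t_{2j} - t_{2j-1}` of an increasing
tuple in `(0, γ)` add up to at most `γ`; integrating over all of `ℝ^{2n}` instead of the simplex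
gives `|a_n(λ)| ≤ e^{2rγ} Q^{2n}` with `Q = ‖q‖₁`. Hence `|a(λ) - 1| ≤ e^{2rγ} Q² / (1 - Q²)`, and
this is `< 1`: with `L = log 2`, the hypothesis and `πL < 4` give `rγ ≤ 1 - Q/L`, while
`x ≤ e^{x-1}` gives `Q e^{1 - Q/L} ≤ L`, so `e^{2rγ} Q² + Q² < 2L² < 1`.
-/

open MeasureTheory Complex Real

/-- The `n`-th simplex integral `a_n(λ)` in the iteration series for the inverse
transmission coefficient of the 1D massless Dirac operator with potential `q`. -/
noncomputable def aCoeff (γ : ℝ) (q : ℝ → ℂ) (n : ℕ) (l : ℂ) : ℂ :=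
  ∫ t : Fin (2 * n) → ℝ in {t | StrictMono t ∧ ∀ i, t i ∈ Set.Ioo 0 γ},
    ∏ j : Fin n,
      q (t ⟨2 * (j : ℕ), by have := j.isLt; omega⟩) *
        (starRingEnd ℂ) (q (t ⟨2 * (j : ℕ) + 1, by have := j.isLt; omega⟩)) *
        Complex.exp (2 * Complex.I * l *
          (((t ⟨2 * (j : ℕ) + 1, by have := j.isLt; omega⟩) : ℝ)
            - (t ⟨2 * (j : ℕ), by have := j.isLt; omega⟩)))

/-- The function `a(λ) = 1 + Σ_{n≥1} a_n(λ)`, whose zeros are the resonances of the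
1D massless Dirac operator. -/
noncomputable def diracA (γ : ℝ) (q : ℝ → ℂ) (l : ℂ) : ℂ :=
  1 + ∑' n : ℕ, aCoeff γ q (n + 1) l

namespace Fin

def evenIdx {n : ℕ} (j : Fin n) : Fin (2 * n) := ⟨2 * j, by omega⟩

def oddIdx {n : ℕ} (j : Fin n) : Fin (2 * n) := ⟨2 * j + 1, by omega⟩

theorem evenIdx_lt_oddIdx {n : ℕ} (j : Fin n) : j.evenIdx < j.oddIdx :=
  Fin.mk_lt_mk.2 (Nat.lt_succ_self _)

theorem prod_mul_evenIdx_oddIdx {M : Type*} [CommMonoid M] {n : ℕ} (f : Fin (2 * n) → M) :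
    ∏ j : Fin n, f j.evenIdx * f j.oddIdx = ∏ i, f i := by
  let e : Fin n × Fin 2 ≃ Fin (2 * n) := finProdFinEquiv.trans (finCongr (Nat.mul_comm n 2))
  have he : ∀ j, e (j, 0) = j.evenIdx ∧ e (j, 1) = j.oddIdx := fun j =>
    ⟨Fin.ext (by simp [e, evenIdx]), Fin.ext (by simp [e, oddIdx, add_comm])⟩
  rw [← e.prod_comp, Fintype.prod_prod_type]
  simp [he]

end Fin

theorem Monotone.sum_range_odd_sub_even_le {u : ℕ → ℝ} (hu : Monotone u) (n : ℕ) :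
    ∑ j ∈ Finset.range n, (u (2 * j + 1) - u (2 * j)) ≤ u (2 * n) - u 0 := by
  induction n with
  | zero => simp
  | succ n ih =>
    rw [Finset.sum_range_succ]
    linarith [hu (by omega : 2 * n + 1 ≤ 2 * (n + 1))]

theorem Monotone.sum_oddIdx_sub_evenIdx_le {n : ℕ} {t : Fin (2 * n) → ℝ} (ht : Monotone t)
    {a b : ℝ} (hab : a ≤ b) (hmem : ∀ i, t i ∈ Set.Icc a b) :
    ∑ j : Fin n, (t j.oddIdx - t j.evenIdx) ≤ b - a := by
  let u : ℕ → ℝ := fun k => if h : k < 2 * n then t ⟨k, h⟩ else b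
  have hu : Monotone u := by
    intro k l hkl
    simp only [u]
    split_ifs with hk hl hl
    · exact ht (by simpa using hkl)
    · exact (hmem _).2
    · omega
    · exact le_rfl
  have hu0 : a ≤ u 0 := by
    simp only [u]
    split_ifs
    exacts [(hmem _).1, hab]
  have hsum : ∑ j : Fin n, (t j.oddIdx - t j.evenIdx) =
      ∑ j ∈ Finset.range n, (u (2 * j + 1) - u (2 * j)) := by
    rw [← Fin.sum_univ_eq_sum_range (fun j => u (2 * j + 1) - u (2 * j))]
    refine Finset.sum_congr rfl fun j _ => ?_
    simp [u, Fin.oddIdx, Fin.evenIdx, show 2 * (j : ℕ) + 1 < 2 * n by omega,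
      show 2 * (j : ℕ) < 2 * n by omega]
  have hlast : u (2 * n) = b := by simp [u]
  linarith [hu.sum_range_odd_sub_even_le n]

theorem norm_exp_two_I_mul_le {z : ℂ} {r : ℝ} (hz : ‖z‖ ≤ r) {d : ℝ} (hd : 0 ≤ d) :
    ‖exp (2 * I * z * d)‖ ≤ Real.exp (2 * r * d) := by
  rw [norm_exp, show (2 * I * z * d).re = 2 * (-z.im) * d by simp]
  gcongr
  exact (neg_le_abs _).trans ((abs_im_le_norm z).trans hz)

def orderedSimplex (γ : ℝ) (m : ℕ) : Set (Fin m → ℝ) :=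
  {t | StrictMono t ∧ ∀ i, t i ∈ Set.Ioo 0 γ}

theorem measurableSet_orderedSimplex (γ : ℝ) (m : ℕ) : MeasurableSet (orderedSimplex γ m) := by
  have hmono : MeasurableSet {t : Fin m → ℝ | StrictMono t} := by
    simp only [StrictMono, Set.ofPred_forall]
    exact .iInter fun i => .iInter fun j => .iInter fun _ =>
      measurableSet_lt (measurable_pi_apply i) (measurable_pi_apply j)
  have hbox : MeasurableSet {t : Fin m → ℝ | ∀ i, t i ∈ Set.Ioo 0 γ} := by
    simp only [Set.ofPred_forall]
    exact .iInter fun i => measurableSet_Ioo.preimage (measurable_pi_apply i)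
  exact hmono.inter hbox

noncomputable def aIntegrand (q : ℝ → ℂ) (n : ℕ) (l : ℂ) (t : Fin (2 * n) → ℝ) : ℂ :=
  ∏ j : Fin n, q (t j.evenIdx) * (starRingEnd ℂ) (q (t j.oddIdx)) *
    exp (2 * I * l * ((t j.oddIdx : ℂ) - t j.evenIdx))

theorem aCoeff_eq_setIntegral (γ : ℝ) (q : ℝ → ℂ) (n : ℕ) (l : ℂ) :
    aCoeff γ q n l = ∫ t in orderedSimplex γ (2 * n), aIntegrand q n l t :=
  rfl

theorem norm_aIntegrand_le {γ : ℝ} (hγ : 0 ≤ γ) (q : ℝ → ℂ) {n : ℕ} {z : ℂ} {r : ℝ}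
    (hz : ‖z‖ ≤ r) {t : Fin (2 * n) → ℝ} (ht : t ∈ orderedSimplex γ (2 * n)) :
    ‖aIntegrand q n z t‖ ≤ Real.exp (2 * r * γ) * ∏ i, ‖q (t i)‖ := by
  have hr : 0 ≤ r := (norm_nonneg z).trans hz
  have hgap : ∀ j : Fin n, 0 ≤ t j.oddIdx - t j.evenIdx := fun j =>
    sub_nonneg.2 (ht.1 j.evenIdx_lt_oddIdx).le
  have hsum : ∑ j : Fin n, (t j.oddIdx - t j.evenIdx) ≤ γ := by
    simpa using ht.1.monotone.sum_oddIdx_sub_evenIdx_le hγ fun i =>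
      Set.Ioo_subset_Icc_self (ht.2 i)
  calc ‖aIntegrand q n z t‖
      = ∏ j : Fin n, ‖q (t j.evenIdx)‖ * ‖q (t j.oddIdx)‖ *
          ‖exp (2 * I * z * ((t j.oddIdx - t j.evenIdx : ℝ) : ℂ))‖ := by
        simp [aIntegrand, norm_prod]
    _ ≤ ∏ j : Fin n, ‖q (t j.evenIdx)‖ * ‖q (t j.oddIdx)‖ *
          Real.exp (2 * r * (t j.oddIdx - t j.evenIdx)) := by
        gcongr with j
        exact norm_exp_two_I_mul_le hz (hgap j)
    _ = (∏ i, ‖q (t i)‖) * Real.exp (2 * r * ∑ j : Fin n, (t j.oddIdx - t j.evenIdx)) := by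
        rw [Finset.prod_mul_distrib, ← Real.exp_sum, Finset.mul_sum,
          Fin.prod_mul_evenIdx_oddIdx fun i => ‖q (t i)‖]
    _ ≤ Real.exp (2 * r * γ) * ∏ i, ‖q (t i)‖ := by
        rw [mul_comm]
        gcongr

theorem norm_aCoeff_le {γ : ℝ} (hγ : 0 ≤ γ) {q : ℝ → ℂ} (hq : Integrable q) (n : ℕ) {z : ℂ}
    {r : ℝ} (hz : ‖z‖ ≤ r) :
    ‖aCoeff γ q n z‖ ≤ Real.exp (2 * r * γ) * (∫ x, ‖q x‖) ^ (2 * n) := by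
  have hprod : Integrable fun t : Fin (2 * n) → ℝ => ∏ i, ‖q (t i)‖ :=
    Integrable.fintype_prod (f := fun _ => fun x => ‖q x‖) fun _ => hq.norm
  rw [aCoeff_eq_setIntegral]
  calc ‖∫ t in orderedSimplex γ (2 * n), aIntegrand q n z t‖
      ≤ ∫ t in orderedSimplex γ (2 * n), ‖aIntegrand q n z t‖ := norm_integral_le_integral_norm _
    _ ≤ ∫ t in orderedSimplex γ (2 * n), Real.exp (2 * r * γ) * ∏ i, ‖q (t i)‖ :=
        integral_mono_of_nonneg (.of_forall fun _ => norm_nonneg _)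
          (hprod.const_mul _).integrableOn
          ((ae_restrict_iff' (measurableSet_orderedSimplex γ _)).2
            (.of_forall fun _ ht => norm_aIntegrand_le hγ q hz ht))
    _ ≤ ∫ t : Fin (2 * n) → ℝ, Real.exp (2 * r * γ) * ∏ i, ‖q (t i)‖ :=
        setIntegral_le_integral (hprod.const_mul _) (.of_forall fun _ => by positivity)
    _ = Real.exp (2 * r * γ) * (∫ x, ‖q x‖) ^ (2 * n) := by
        rw [integral_const_mul, integral_fintype_prod_volume_eq_pow (fun x => ‖q x‖),
          Fintype.card_fin]

theorem one_add_tsum_ne_zero_of_norm_le_geometric {E : Type*} [NormedRing E] [NormOneClass E]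
    {f : ℕ → E} {C ρ : ℝ} (hρ : 0 ≤ ρ) (hf : ∀ n, ‖f n‖ ≤ C * ρ ^ (n + 1))
    (hsmall : C * ρ + ρ < 1) : 1 + ∑' n, f n ≠ 0 := by
  have hCρ : 0 ≤ C * ρ := by simpa using (norm_nonneg _).trans (hf 0)
  have hρ1 : ρ < 1 := by linarith
  have hsum : HasSum (fun n => C * ρ ^ (n + 1)) (C * ρ * (1 - ρ)⁻¹) := by
    simpa [pow_succ, mul_assoc, mul_comm, mul_left_comm] using
      (hasSum_geometric_of_lt_one hρ hρ1).mul_left (C * ρ)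
  have hnorm : ‖∑' n, f n‖ < 1 := by
    refine (tsum_of_norm_bounded hsum hf).trans_lt ?_
    rw [← div_eq_mul_inv, div_lt_one (by linarith)]
    linarith
  intro h
  rw [eq_neg_of_add_eq_zero_right h, norm_neg, norm_one] at hnorm
  exact lt_irrefl _ hnorm

theorem mul_exp_one_sub_div_le (x : ℝ) {L : ℝ} (hL : 0 < L) : x * Real.exp (1 - x / L) ≤ L := by
  have h : x / L ≤ Real.exp (x / L - 1) := by linarith [Real.add_one_le_exp (x / L - 1)]
  calc x * Real.exp (1 - x / L) = L * (x / L) * Real.exp (-(x / L - 1)) := by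
        rw [mul_div_cancel₀ x hL.ne', neg_sub]
    _ ≤ L * Real.exp (x / L - 1) * Real.exp (-(x / L - 1)) := by gcongr
    _ = L := by rw [mul_assoc, ← Real.exp_add, add_neg_cancel, Real.exp_zero, mul_one]

theorem exp_mul_sq_add_sq_lt_one {s Q : ℝ} (hs : 0 ≤ s) (hQ : 0 ≤ Q)
    (h : 4 * s / π + Q < Real.log 2) : Real.exp (2 * s) * Q ^ 2 + Q ^ 2 < 1 := by
  set L := Real.log 2
  have hL : 0 < L := Real.log_pos one_lt_two
  have hL1 : L < 0.7 := by linarith [Real.log_two_lt_d9]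
  have hQL : Q < L := by linarith [div_nonneg (by positivity : 0 ≤ 4 * s) pi_pos.le]
  have h4 : 4 * s < (L - Q) * π := (div_lt_iff₀ pi_pos).1 (by linarith)
  have hsL : s ≤ 1 - Q / L := by
    rw [one_sub_div hL.ne', le_div_iff₀ hL]
    nlinarith [mul_lt_mul_of_pos_right h4 hL, mul_le_mul_of_nonneg_left
      (by nlinarith [pi_lt_four] : π * L ≤ 4) (by linarith : 0 ≤ L - Q)]
  have hexp : Real.exp (2 * s) * Q ^ 2 ≤ L ^ 2 := calc
    Real.exp (2 * s) * Q ^ 2 ≤ Real.exp (2 * (1 - Q / L)) * Q ^ 2 := by gcongr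
    _ = (Q * Real.exp (1 - Q / L)) ^ 2 := by rw [mul_pow, ← Real.exp_nat_mul]; ring_nf
    _ ≤ L ^ 2 := by gcongr; exact mul_exp_one_sub_div_le Q hL
  nlinarith

theorem no_resonances_in_small_disk_general (γ : ℝ) (hγ : 0 < γ) (q : ℝ → ℂ)
    (hq : Integrable q) (r : ℝ)
    (hsmall : 4 * r * γ / π + (∫ x : ℝ, ‖q x‖) < Real.log 2) :
    ∀ z : ℂ, ‖z‖ ≤ r → diracA γ q z ≠ 0 := by
  intro z hz
  have hr : 0 ≤ r := (norm_nonneg z).trans hz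
  have hQ : 0 ≤ ∫ x : ℝ, ‖q x‖ := integral_nonneg fun _ => norm_nonneg _
  refine one_add_tsum_ne_zero_of_norm_le_geometric (sq_nonneg _) (fun n => ?_)
    (exp_mul_sq_add_sq_lt_one (s := r * γ) (by positivity) hQ (by rwa [mul_assoc 4] at hsmall))
  rw [← pow_mul, ← mul_assoc]
  exact norm_aCoeff_le hγ.le hq (n + 1) hz

/-- If `4rγ/π + ‖q‖₁ < log 2` then `a` has no zeros of modulus at most `r`; in
particular the Dirac operator has no resonances in the disk `{λ : |λ| ≤ r}`. -/
theorem no_resonances_in_small_disk (γ : ℝ) (hγ : 0 < γ) (q : ℝ → ℂ)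
    (hq : Integrable q) (hsupp : Function.support q ⊆ Set.Icc 0 γ)
    (r : ℝ) (hr : 0 < r)
    (hsmall : 4 * r * γ / π + (∫ x : ℝ, ‖q x‖) < Real.log 2) :
    ∀ z : ℂ, ‖z‖ ≤ r → diracA γ q z ≠ 0 :=
  no_resonances_in_small_disk_general γ hγ q hq r hsmall
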